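/- The permutation f of the vertex set of the middle levels graph M_n defines a cycle factor: the orbits of f partition the vertices of M_n into cycles, each of which is a cycle in the graph M_n (i.e., consecutive orbit elements are adjacent in M_n and each orbit has length at least 3). -/

import Mathlib

/-!
Every vertex of `M_n` is `rotR s (x ++ [b])` for a unique Dyck word `x` of length `2n` and a unique
shift `s ≤ 2n`: this is the cycle lemma, proved by rotating the word to the first (for `b = 0`)
or last (for `b = 1`) minimum of its height profile. Writing `x = 1u0v`, a vertex and its next two
images under `f` are among `1u0v1, 1u0v0, 1u1v0, 0u1v0`, all read through the same `rotR s`, so each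
step flips one bit and a vertex differs from its second image in the first or the last letter.
Tree rotation is injective on Dyck words (`u` is the longest proper prefix of `u1v0` of height
`0`), hence so is `f`, and an injective self-map of a finite set is a bijection.
-/

/-- Every prefix has at least as many 1s (`true`) as 0s (`false`). -/
def IsDyckPrefix (x : List Bool) : Prop :=
  ∀ p : List Bool, p <+: x → p.count false ≤ p.count true

/-- A (balanced) Dyck word. -/
def IsDyckWord (x : List Bool) : Prop :=
  x.count true = x.count false ∧ IsDyckPrefix x

/-- A Dyck word of length `2*n` (so with `n` ones). -/
def DyckN (n : ℕ) (x : List Bool) : Prop :=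
  x.length = 2 * n ∧ x.count true = n ∧ IsDyckPrefix x

/-- Cyclic right rotation by `s` steps. -/
def rotR (s : ℕ) (x : List Bool) : List Bool :=
  x.rotate (x.length - s % x.length)

/-- `a` and `b` differ in exactly one bit. -/
def oneBitDiff (a b : List Bool) : Prop :=
  a.length = b.length ∧
    ((Finset.range a.length).filter fun i => a[i]? ≠ b[i]?).card = 1

def height (l : List Bool) : ℤ := l.count true - l.count false

@[simp] lemma height_nil : height [] = 0 := rfl

@[simp] lemma height_cons_true (l : List Bool) : height (true :: l) = height l + 1 := by
  rw [height, height, List.count_cons_self, List.count_cons_of_ne (by decide)]; push_cast; ring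

@[simp] lemma height_cons_false (l : List Bool) : height (false :: l) = height l - 1 := by
  rw [height, height, List.count_cons_self, List.count_cons_of_ne (by decide)]; push_cast; ring

@[simp] lemma height_append (a b : List Bool) : height (a ++ b) = height a + height b := by
  simp only [height, List.count_append]; push_cast; ring

lemma height_rotate (l : List Bool) (k : ℕ) : height (l.rotate k) = height l := by
  simp only [height, (l.rotate_perm k).count_eq]

lemma isDyckPrefix_iff {x : List Bool} : IsDyckPrefix x ↔ ∀ p, p <+: x → 0 ≤ height p := by
  simp only [IsDyckPrefix, height, sub_nonneg, Nat.cast_le]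

lemma IsDyckWord.height_eq_zero {x : List Bool} (hx : IsDyckWord x) : height x = 0 := by
  simp [height, hx.1]

lemma IsDyckWord.height_nonneg {x p : List Bool} (hx : IsDyckWord x) (hp : p <+: x) :
    0 ≤ height p :=
  isDyckPrefix_iff.1 hx.2 p hp

lemma isDyckWord_of_height {x : List Bool} (h0 : height x = 0)
    (h : ∀ j < x.length, 0 ≤ height (x.take j)) : IsDyckWord x := by
  refine ⟨by rw [height] at h0; omega, isDyckPrefix_iff.2 fun p hp => ?_⟩
  rw [List.prefix_iff_eq_take.1 hp]
  rcases hp.length_le.lt_or_eq with hlt | heq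
  · exact h _ hlt
  · rw [heq, List.take_length, h0]

lemma DyckN.isDyckWord {n : ℕ} {x : List Bool} (hx : DyckN n x) : IsDyckWord x :=
  ⟨by have := x.count_true_add_count_false; have := hx.1; have := hx.2.1; omega, hx.2.2⟩

lemma dyckN_of_isDyckWord {n : ℕ} {x : List Bool} (hx : IsDyckWord x) (hl : x.length = 2 * n) :
    DyckN n x :=
  ⟨hl, by have := x.count_true_add_count_false; have := hx.1; omega, hx.2⟩

/-- Cut `y` at the first prefix of negative height. -/
lemma exists_isDyckWord_append_false {y : List Bool} (hy : height y < 0) :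
    ∃ u v, IsDyckWord u ∧ y = u ++ false :: v := by
  classical
  have hex : ∃ j, height (y.take j) < 0 := ⟨y.length, by rwa [List.take_length]⟩
  have hneg : height (y.take (Nat.find hex)) < 0 := Nat.find_spec hex
  have hmin : ∀ j < Nat.find hex, 0 ≤ height (y.take j) := fun j hj =>
    not_lt.1 (Nat.find_min hex hj)
  obtain ⟨j, hj⟩ : ∃ j, Nat.find hex = j + 1 :=
    Nat.exists_eq_succ_of_ne_zero fun h => by rw [h] at hneg; simp at hneg
  have hjy : j < y.length := by
    by_contra! h
    have := hmin y.length (by omega)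
    rw [List.take_length] at this
    omega
  have hsplit : y = y.take j ++ y[j] :: y.drop (j + 1) := by
    rw [List.getElem_cons_drop, List.take_append_drop]
  have hj0 := hmin j (by omega)
  rw [hj, List.take_add_one, List.getElem?_eq_getElem hjy, Option.toList_some,
    height_append] at hneg
  have hyj : y[j] = false := by
    cases hb : y[j]
    · rfl
    · rw [hb, height_cons_true, height_nil] at hneg
      omega
  rw [hyj, height_cons_false, height_nil] at hneg
  refine ⟨y.take j, y.drop (j + 1), isDyckWord_of_height (by omega) fun i hi => ?_, hyj ▸ hsplit⟩
  rw [List.take_take]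
  exact hmin _ (by rw [List.length_take] at hi; omega)

lemma IsDyckWord.exists_eq_true_append_false_append {x : List Bool} (hx : IsDyckWord x)
    (hne : x ≠ []) : ∃ u v, IsDyckWord u ∧ IsDyckWord v ∧ x = [true] ++ u ++ [false] ++ v := by
  obtain ⟨c, y, rfl⟩ := List.exists_cons_of_ne_nil hne
  obtain rfl : c = true := by
    have := hx.height_nonneg (p := [c]) (by simp)
    cases c <;> simp_all
  have hx0 := hx.height_eq_zero
  rw [height_cons_true] at hx0
  obtain ⟨u, v, hu, rfl⟩ := exists_isDyckWord_append_false (y := y) (by omega)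
  refine ⟨u, v, hu, isDyckWord_of_height ?_ fun j _ => ?_, by simp⟩
  · rw [height_append, height_cons_false, hu.height_eq_zero] at hx0
    omega
  · have := hx.height_nonneg (p := true :: (u ++ false :: v.take j)) (by simp [List.take_prefix])
    simpa [hu.height_eq_zero] using this

lemma isDyckWord_append_true_append_false {u v : List Bool} (hu : IsDyckWord u)
    (hv : IsDyckWord v) : IsDyckWord (u ++ [true] ++ v ++ [false]) := by
  refine isDyckWord_of_height (by simp [hu.height_eq_zero, hv.height_eq_zero]) fun j hj => ?_
  rcases le_or_gt j u.length with h | h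
  · rw [List.append_assoc, List.append_assoc, List.take_append_of_le_length h]
    exact hu.height_nonneg (List.take_prefix j u)
  obtain ⟨i, rfl⟩ : ∃ i, j = u.length + 1 + i := ⟨j - u.length - 1, by omega⟩
  have hi : i ≤ v.length := by
    simp only [List.length_append, List.length_singleton] at hj
    omega
  have : (u ++ [true] ++ v ++ [false]).take (u.length + 1 + i) = u ++ true :: v.take i := by
    simp only [List.append_assoc, List.singleton_append, List.take_append]
    rw [List.take_of_length_le (by omega), show u.length + 1 + i - u.length = i + 1 by omega]
    simp [Nat.sub_eq_zero_of_le hi]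
  rw [this, height_append, height_cons_true, hu.height_eq_zero]
  have := hv.height_nonneg (List.take_prefix i v)
  omega

/-- A longer `u'` would be `u ++ true :: a` with `a` a prefix of `v`, so of positive height. -/
lemma append_true_append_false_inj {u v u' v' : List Bool} (hu : IsDyckWord u)
    (hv : IsDyckWord v) (hu' : IsDyckWord u') (hv' : IsDyckWord v')
    (h : u ++ [true] ++ v ++ [false] = u' ++ [true] ++ v' ++ [false]) : u = u' ∧ v = v' := by
  wlog hle : u.length ≤ u'.length generalizing u v u' v'
  · exact (this hu' hv' hu hv h.symm (by omega)).imp Eq.symm Eq.symm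
  have h' : u ++ true :: (v ++ [false]) = u' ++ true :: (v' ++ [false]) := by simpa using h
  rcases List.append_eq_append_iff.1 h' with ⟨_ | ⟨d, a⟩, rfl, ha⟩ | ⟨c, rfl, hc⟩
  · simpa using ha
  · simp only [List.cons_append, List.cons.injEq] at ha
    obtain ⟨rfl, ha⟩ := ha
    have hva : v = a ++ true :: v' := List.append_cancel_right (by simpa using ha)
    have := hv.height_nonneg (hva ▸ List.prefix_append a _)
    have := hu'.height_eq_zero
    rw [height_append, height_cons_true, hu.height_eq_zero] at this
    omega
  · obtain rfl : c = [] := by simpa using hle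
    exact ⟨by simp, (by simpa using hc : v' = v).symm⟩

@[simp] lemma length_rotR (s : ℕ) (w : List Bool) : (rotR s w).length = w.length :=
  List.length_rotate _ _

@[simp] lemma count_rotR (s : ℕ) (w : List Bool) (b : Bool) : (rotR s w).count b = w.count b :=
  (List.rotate_perm _ _).count_eq b

lemma rotR_mod (s : ℕ) (w : List Bool) : rotR (s % w.length) w = rotR s w := by
  simp [rotR]

lemma rotate_rotR (s : ℕ) (w : List Bool) : (rotR s w).rotate s = w := by
  by_cases hw : w = []
  · simp [hw, rotR]
  · have := Nat.mod_lt s (List.length_pos_of_ne_nil hw)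
    rw [rotR, ← List.rotate_mod, List.length_rotate, List.rotate_rotate,
      Nat.sub_add_cancel this.le, List.rotate_length]

lemma rotR_rotate (s : ℕ) (w : List Bool) : rotR s (w.rotate s) = w :=
  List.rotate_injective s (rotate_rotR s _)

lemma rotR_eq_iff {s : ℕ} {w v : List Bool} : rotR s w = v ↔ w = v.rotate s :=
  ⟨fun h => h ▸ (rotate_rotR s w).symm, fun h => h ▸ rotR_rotate s v⟩

lemma rotR_cons (s : ℕ) (c : Bool) (z : List Bool) :
    rotR s (c :: z) = rotR (s + 1) (z ++ [c]) := by
  rw [rotR_eq_iff]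
  apply List.rotate_injective 1
  simp only [List.rotate_rotate, rotate_rotR, List.rotate_cons_succ, List.rotate_zero]

lemma rotate_eq_of_rotR_eq {s₁ s₂ : ℕ} {w₁ w₂ : List Bool} (h : rotR s₁ w₁ = rotR s₂ w₂)
    (hs : s₁ ≤ s₂) : w₂ = w₁.rotate (s₂ - s₁) := by
  rw [rotR_eq_iff.1 h, List.rotate_rotate, Nat.add_sub_cancel' hs, rotate_rotR]

lemma rotR_injective (s : ℕ) : Function.Injective (rotR s) := fun _ _ h => by
  simpa using (rotate_eq_of_rotR_eq h le_rfl).symm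

lemma height_take_rotate {w : List Bool} {k j : ℕ} (hk : k ≤ w.length) (hj : j ≤ w.length) :
    height ((w.rotate k).take j) =
      height (w.take (k + j)) - height (w.take k) + height (w.take (j - (w.length - k))) := by
  rw [List.rotate_eq_drop_append_take hk, List.take_append, List.take_take, List.length_drop,
    Nat.min_eq_left (by omega : j - (w.length - k) ≤ k), height_append, List.take_add,
    height_append]
  ring

lemma exists_isDyckWord_eq_append_false {y : List Bool} (hy : height y = -1)
    (h : ∀ j < y.length, 0 ≤ height (y.take j)) : ∃ x, IsDyckWord x ∧ y = x ++ [false] := by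
  obtain ⟨u, v, hu, rfl⟩ := exists_isDyckWord_append_false (y := y) (by omega)
  obtain rfl : v = [] := by
    by_contra hv
    have := h (u.length + 1) (by simp [List.length_pos_of_ne_nil hv])
    rw [List.take_append, List.take_of_length_le (by omega), Nat.add_sub_cancel_left] at this
    simp [hu.height_eq_zero] at this
  exact ⟨u, hu, rfl⟩

lemma exists_isDyckWord_eq_true_cons {y : List Bool} (hy : height y = 1)
    (h : ∀ j, 0 < j → j ≤ y.length → 0 < height (y.take j)) :
    ∃ x, IsDyckWord x ∧ y = true :: x := by
  obtain _ | ⟨c, x⟩ := y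
  · simp at hy
  obtain rfl : c = true := by
    have := h 1 one_pos (by simp)
    cases c <;> simp_all
  rw [height_cons_true] at hy
  refine ⟨x, isDyckWord_of_height (by omega) fun j hj => ?_, rfl⟩
  have := h (j + 1) (by omega) (by rw [List.length_cons]; omega)
  rw [List.take_succ_cons, height_cons_true] at this
  omega

/-- Rotating `w` to the first minimum of its height profile leaves only nonnegative proper
prefixes. -/
lemma exists_rotate_eq_append_false {w : List Bool} (hw : height w = -1) :
    ∃ k x, IsDyckWord x ∧ w.rotate k = x ++ [false] := by
  classical
  have hne : w ≠ [] := by rintro rfl; simp at hw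
  have hex : ∃ k < w.length, ∀ i < w.length, height (w.take k) ≤ height (w.take i) := by
    obtain ⟨k, hk, hmin⟩ :=
      (Finset.range w.length).exists_min_image (fun i => height (w.take i))
      ⟨0, by simpa using List.length_pos_of_ne_nil hne⟩
    exact ⟨k, by simpa using hk, fun i hi => hmin i (by simpa using hi)⟩
  obtain ⟨hkm, hmin⟩ := Nat.find_spec hex
  have hfirst : ∀ i < Nat.find hex, height (w.take (Nat.find hex)) < height (w.take i) := by
    intro i hi
    have := Nat.find_min hex hi
    push Not at this
    obtain ⟨i', hi', hlt⟩ := this (by omega)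
    exact (hmin i' hi').trans_lt hlt
  refine ⟨Nat.find hex, exists_isDyckWord_eq_append_false (by rwa [height_rotate]) fun j hj => ?_⟩
  rw [List.length_rotate] at hj
  rw [height_take_rotate hkm.le hj.le]
  rcases lt_or_ge (Nat.find hex + j) w.length with h | h
  · have := hmin _ h
    rw [Nat.sub_eq_zero_of_le (by omega : j ≤ w.length - Nat.find hex), List.take_zero,
      height_nil]
    omega
  · have := hfirst (j - (w.length - Nat.find hex)) (by omega)
    rw [List.take_of_length_le h, hw]
    omega

/-- Rotating `w` to the last minimum of its height profile leaves only positive nonempty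
prefixes. -/
lemma exists_rotate_eq_true_cons {w : List Bool} (hw : height w = 1) :
    ∃ k x, IsDyckWord x ∧ w.rotate k = true :: x := by
  classical
  set Q := fun k => ∀ i ≤ w.length, height (w.take k) ≤ height (w.take i)
  have hex : ∃ k ≤ w.length, Q k := by
    obtain ⟨k, hk, hmin⟩ :=
      (Finset.range (w.length + 1)).exists_min_image (fun i => height (w.take i)) ⟨0, by simp⟩
    exact ⟨k, by simpa [Nat.lt_succ_iff] using hk,
      fun i hi => hmin i (by simpa [Nat.lt_succ_iff] using hi)⟩
  obtain ⟨k₀, hk₀, hQ₀⟩ := hex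
  have hmin : Q (Nat.findGreatest Q w.length) := Nat.findGreatest_spec hk₀ hQ₀
  have hlast : ∀ i, Nat.findGreatest Q w.length < i → i ≤ w.length →
      height (w.take (Nat.findGreatest Q w.length)) < height (w.take i) := by
    intro i hki hi
    obtain ⟨i', hi', hlt⟩ : ∃ i' ≤ w.length, height (w.take i') < height (w.take i) := by
      simpa [Q] using Nat.findGreatest_is_greatest hki hi
    exact (hmin i' hi').trans_lt hlt
  have hkle : Nat.findGreatest Q w.length ≤ w.length := Nat.findGreatest_le _
  generalize Nat.findGreatest Q w.length = k at hmin hlast hkle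
  have hkm : k < w.length := by
    refine hkle.lt_of_ne fun hk => ?_
    have := hmin 0 (by omega)
    simp [hk, hw] at this
  refine ⟨k, exists_isDyckWord_eq_true_cons (by rwa [height_rotate]) fun j hj hjm => ?_⟩
  rw [List.length_rotate] at hjm
  rw [height_take_rotate hkm.le hjm]
  rcases le_or_gt (k + j) w.length with h | h
  · have := hlast (k + j) (by omega) h
    rw [Nat.sub_eq_zero_of_le (by omega : j ≤ w.length - k), List.take_zero, height_nil]
    omega
  · have := hmin (j - (w.length - k)) (by omega)
    rw [List.take_of_length_le h.le, hw]
    omega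

lemma exists_rotate_eq_append_singleton {w : List Bool} {b : Bool}
    (hw : height w = height [b]) : ∃ k x, IsDyckWord x ∧ w.rotate k = x ++ [b] := by
  cases b
  · exact exists_rotate_eq_append_false hw
  · obtain ⟨k, x, hx, h⟩ := exists_rotate_eq_true_cons hw
    exact ⟨k + 1, x, hx, by rw [← List.rotate_rotate, h, List.rotate_cons_succ, List.rotate_zero]⟩

/-- For `0 < t`, write `x = a ++ c`: `a` is a prefix of `x` ending in `b` and `c` one of `x'`.
Both `a, c` and `a.dropLast, c ++ [b]` are pairs of nonnegative heights summing to `0`, which is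
impossible as `height [b] = ±1`. -/
lemma eq_zero_of_rotate_append_singleton_eq {x x' : List Bool} {b : Bool} {t : ℕ}
    (hx : IsDyckWord x) (hx' : IsDyckWord x') (ht : t ≤ x.length)
    (h : (x ++ [b]).rotate t = x' ++ [b]) : t = 0 := by
  by_contra ht0
  rw [List.rotate_eq_drop_append_take (by rw [List.length_append]; omega),
    List.drop_append_of_le_length ht, List.take_append_of_le_length ht] at h
  have hne : x.take t ≠ [] := List.ne_nil_of_length_pos (by rw [List.length_take]; omega)
  obtain ⟨u, c, hu⟩ : ∃ u c, x.take t = u ++ [c] :=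
    ⟨_, _, (List.dropLast_append_getLast hne).symm⟩
  rw [hu, ← List.append_assoc] at h
  obtain ⟨rfl, hcb⟩ := List.append_inj' h rfl
  obtain rfl : c = b := by simpa using hcb
  have hsum := hx.height_eq_zero
  rw [← List.take_append_drop t x, height_append] at hsum
  have h₁ := hx.height_nonneg (List.take_prefix t x)
  have h₂ := hx'.height_nonneg ((List.prefix_append _ [c]).trans (List.prefix_append _ u))
  have h₃ := hx.height_nonneg ((hu ▸ List.prefix_append u [c]).trans (List.take_prefix t x))
  have h₄ := hx'.height_nonneg (List.prefix_append (x.drop t ++ [c]) u)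
  rw [hu] at h₁ hsum
  cases c <;>
    simp only [height_append, height_cons_true, height_cons_false, height_nil] at h₁ h₄ hsum <;>
    omega

lemma rotR_append_singleton_inj {x₁ x₂ : List Bool} {b : Bool} {s₁ s₂ : ℕ}
    (hx₁ : IsDyckWord x₁) (hx₂ : IsDyckWord x₂) (hs₁ : s₁ ≤ s₂ + x₁.length)
    (hs₂ : s₂ ≤ s₁ + x₁.length) (h : rotR s₁ (x₁ ++ [b]) = rotR s₂ (x₂ ++ [b])) :
    s₁ = s₂ ∧ x₁ = x₂ := by
  wlog hle : s₁ ≤ s₂ generalizing s₁ s₂ x₁ x₂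
  · have hl : x₁.length = x₂.length := by simpa using congrArg List.length h
    exact (this hx₂ hx₁ (by omega) (by omega) h.symm (by omega)).imp Eq.symm Eq.symm
  have hrot := rotate_eq_of_rotR_eq h hle
  have ht := eq_zero_of_rotate_append_singleton_eq hx₁ hx₂ (by omega) hrot.symm
  rw [ht, List.rotate_zero] at hrot
  exact ⟨by omega, (List.append_cancel_right hrot).symm⟩

lemma exists_rotate_append_cons {α : Type*} (p q : List α) (k : ℕ) :
    ∃ p' q', ∀ c : α, (p ++ c :: q).rotate k = p' ++ c :: q' := by
  induction k with
  | zero => exact ⟨p, q, by simp⟩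
  | succ k ih =>
    obtain ⟨_ | ⟨d, p'⟩, q', h⟩ := ih
    · exact ⟨q', [], fun c => by rw [← List.rotate_rotate, h]; simp⟩
    · exact ⟨p', q' ++ [d], fun c => by rw [← List.rotate_rotate, h]; simp⟩

lemma oneBitDiff_append_cons (p q : List Bool) {a b : Bool} (hab : a ≠ b) :
    oneBitDiff (p ++ a :: q) (p ++ b :: q) := by
  refine ⟨by simp, ?_⟩
  have : (Finset.range (p ++ a :: q).length).filter
      (fun i => (p ++ a :: q)[i]? ≠ (p ++ b :: q)[i]?) = {p.length} := by
    ext i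
    simp only [Finset.mem_filter, Finset.mem_range, Finset.mem_singleton]
    constructor
    · rintro ⟨-, hne⟩
      by_contra hip
      rcases Nat.lt_or_gt_of_ne hip with h | h
      · simp [List.getElem?_append_left h] at hne
      · obtain ⟨d, hd⟩ : ∃ d, i - p.length = d + 1 := ⟨i - p.length - 1, by omega⟩
        simp [List.getElem?_append_right h.le, hd] at hne
    · rintro rfl
      simp [hab]
  rw [this, Finset.card_singleton]

lemma oneBitDiff_rotR_append_cons (s : ℕ) (p q : List Bool) {a b : Bool} (hab : a ≠ b) :
    oneBitDiff (rotR s (p ++ a :: q)) (rotR s (p ++ b :: q)) := by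
  have hl : (p ++ b :: q).length = (p ++ a :: q).length := by simp
  obtain ⟨p', q', h⟩ :=
    exists_rotate_append_cons p q ((p ++ a :: q).length - s % (p ++ a :: q).length)
  rw [rotR, rotR, hl, h, h]
  exact oneBitDiff_append_cons p' q' hab

lemma oneBitDiff.ne {a b : List Bool} (h : oneBitDiff a b) : a ≠ b := by
  rintro rfl
  simpa using h.2

def middleLevels (n : ℕ) : Set (List Bool) :=
  {y | y.length = 2 * n + 1 ∧ (y.count true = n ∨ y.count true = n + 1)}

lemma DyckN.append_true_append_false {n : ℕ} {u v : List Bool}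
    (hx : DyckN n ([true] ++ u ++ [false] ++ v)) (hu : IsDyckWord u) (hv : IsDyckWord v) :
    DyckN n (u ++ [true] ++ v ++ [false]) := by
  refine dyckN_of_isDyckWord (isDyckWord_append_true_append_false hu hv) ?_
  have := hx.1
  simp only [List.length_append, List.length_singleton] at this ⊢
  omega

lemma DyckN.count_true_rotR_append_singleton {n : ℕ} {x : List Bool} (hx : DyckN n x) (s : ℕ)
    (b : Bool) : (rotR s (x ++ [b])).count true = n + b.toNat := by
  cases b <;> simp [hx.2.1]

lemma DyckN.rotR_append_singleton_mem {n : ℕ} {x : List Bool} (hx : DyckN n x) (s : ℕ)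
    (b : Bool) : rotR s (x ++ [b]) ∈ middleLevels n :=
  ⟨by simp [hx.1], by cases b <;> simp [hx.count_true_rotR_append_singleton]⟩

lemma exists_eq_rotR_of_mem_middleLevels {n : ℕ} (hn : 1 ≤ n) {y : List Bool}
    (hy : y ∈ middleLevels n) :
    ∃ u v b s, IsDyckWord u ∧ IsDyckWord v ∧ DyckN n ([true] ++ u ++ [false] ++ v) ∧
      s ≤ 2 * n ∧ y = rotR s ([true] ++ u ++ [false] ++ v ++ [b]) := by
  obtain ⟨hl, hc⟩ := hy
  obtain ⟨b, hb⟩ : ∃ b : Bool, height y = height [b] := by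
    have := y.count_true_add_count_false
    rcases hc with hc | hc
    exacts [⟨false, show _ = -1 by rw [height]; omega⟩, ⟨true, show _ = 1 by rw [height]; omega⟩]
  obtain ⟨k, x, hx, hk⟩ := exists_rotate_eq_append_singleton hb
  have hxl : x.length = 2 * n := by
    have := congrArg List.length hk
    rw [List.length_rotate, List.length_append, List.length_singleton] at this
    omega
  obtain ⟨u, v, hu, hv, rfl⟩ :=
    hx.exists_eq_true_append_false_append (List.ne_nil_of_length_pos (by omega))
  refine ⟨u, v, b, k % (2 * n + 1), hu, hv, dyckN_of_isDyckWord hx hxl,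
    Nat.le_of_lt_succ (Nat.mod_lt _ (by omega)), ?_⟩
  rw [← rotR_rotate k y, hk, ← rotR_mod, List.length_append, hxl, List.length_singleton]

/-- `F` is the map `f` written in the coordinates `rotR s (x ++ [b])`, and `r` is tree rotation. -/
structure IsCycleMap (n : ℕ) (r F : List Bool → List Bool) : Prop where
  rotation_eq : ∀ u v, IsDyckWord u → IsDyckWord v →
    r ([true] ++ u ++ [false] ++ v) = u ++ [true] ++ v ++ [false]
  apply_rotR_append_false : ∀ x s, DyckN n x → s ≤ 2 * n →
    F (rotR s (x ++ [false])) = rotR (s + 1) (r x ++ [true])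
  apply_rotR_append_true : ∀ x s, DyckN n x → s ≤ 2 * n →
    F (rotR s (x ++ [true])) = rotR s (x ++ [false])

namespace IsCycleMap

variable {n : ℕ} {r F : List Bool → List Bool}

lemma apply_rotR_append_false_eq_rotR_cons (hf : IsCycleMap n r F) {u v : List Bool} {s : ℕ}
    (hu : IsDyckWord u) (hv : IsDyckWord v) (hx : DyckN n ([true] ++ u ++ [false] ++ v))
    (hs : s ≤ 2 * n) :
    F (rotR s ([true] ++ u ++ [false] ++ v ++ [false])) =
      rotR s (true :: (u ++ [true] ++ v ++ [false])) := by
  rw [hf.apply_rotR_append_false _ s hx hs, hf.rotation_eq u v hu hv, rotR_cons]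

lemma apply_rotR_true_cons (hf : IsCycleMap n r F) {z : List Bool} (hz : DyckN n z) (s : ℕ) :
    F (rotR s (true :: z)) = rotR s (false :: z) := by
  have hm : (s + 1) % (2 * n + 1) ≤ 2 * n := Nat.le_of_lt_succ (Nat.mod_lt _ (by omega))
  have hl (c : Bool) : (z ++ [c]).length = 2 * n + 1 := by simp [hz.1]
  rw [rotR_cons, rotR_cons, ← rotR_mod, hl true, hf.apply_rotR_append_true z _ hz hm]
  conv_rhs => rw [← rotR_mod, hl false]

lemma mapsTo (hf : IsCycleMap n r F) (hn : 1 ≤ n) :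
    Set.MapsTo F (middleLevels n) (middleLevels n) := by
  intro y hy
  obtain ⟨u, v, b, s, hu, hv, hx, hs, rfl⟩ := exists_eq_rotR_of_mem_middleLevels hn hy
  cases b
  · rw [hf.apply_rotR_append_false_eq_rotR_cons hu hv hx hs, rotR_cons]
    exact (hx.append_true_append_false hu hv).rotR_append_singleton_mem _ _
  · rw [hf.apply_rotR_append_true _ s hx hs]
    exact hx.rotR_append_singleton_mem _ _

lemma injOn (hf : IsCycleMap n r F) (hn : 1 ≤ n) : Set.InjOn F (middleLevels n) := by
  intro y₁ hy₁ y₂ hy₂ h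
  obtain ⟨u₁, v₁, b₁, s₁, hu₁, hv₁, hx₁, hs₁, rfl⟩ := exists_eq_rotR_of_mem_middleLevels hn hy₁
  obtain ⟨u₂, v₂, b₂, s₂, hu₂, hv₂, hx₂, hs₂, rfl⟩ := exists_eq_rotR_of_mem_middleLevels hn hy₂
  have hz₁ := hx₁.append_true_append_false hu₁ hv₁
  have hz₂ := hx₂.append_true_append_false hu₂ hv₂
  cases b₁ <;> cases b₂
  · rw [hf.apply_rotR_append_false_eq_rotR_cons hu₁ hv₁ hx₁ hs₁,
      hf.apply_rotR_append_false_eq_rotR_cons hu₂ hv₂ hx₂ hs₂, rotR_cons, rotR_cons] at h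
    obtain ⟨hs, hz⟩ := rotR_append_singleton_inj hz₁.isDyckWord hz₂.isDyckWord
      (by rw [hz₁.1]; omega) (by rw [hz₁.1]; omega) h
    obtain ⟨rfl, rfl⟩ := append_true_append_false_inj hu₁ hv₁ hu₂ hv₂ hz
    rw [show s₁ = s₂ by omega]
  · rw [hf.apply_rotR_append_false_eq_rotR_cons hu₁ hv₁ hx₁ hs₁,
      hf.apply_rotR_append_true _ s₂ hx₂ hs₂, rotR_cons] at h
    have := congrArg (List.count true) h
    rw [hz₁.count_true_rotR_append_singleton, hx₂.count_true_rotR_append_singleton] at this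
    simp at this
  · rw [hf.apply_rotR_append_true _ s₁ hx₁ hs₁,
      hf.apply_rotR_append_false_eq_rotR_cons hu₂ hv₂ hx₂ hs₂, rotR_cons] at h
    have := congrArg (List.count true) h
    rw [hx₁.count_true_rotR_append_singleton, hz₂.count_true_rotR_append_singleton] at this
    simp at this
  · rw [hf.apply_rotR_append_true _ s₁ hx₁ hs₁, hf.apply_rotR_append_true _ s₂ hx₂ hs₂] at h
    obtain ⟨rfl, hx⟩ := rotR_append_singleton_inj hx₁.isDyckWord hx₂.isDyckWord
      (by rw [hx₁.1]; omega) (by rw [hx₁.1]; omega) h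
    rw [hx]

lemma bijOn (hf : IsCycleMap n r F) (hn : 1 ≤ n) :
    Set.BijOn F (middleLevels n) (middleLevels n) :=
  (((List.finite_length_eq Bool (2 * n + 1)).subset fun _ hy => hy.1).injOn_iff_bijOn_of_mapsTo
    (hf.mapsTo hn)).1 (hf.injOn hn)

lemma oneBitDiff_apply_and_ne_and_apply_apply_ne (hf : IsCycleMap n r F) (hn : 1 ≤ n)
    {y : List Bool} (hy : y ∈ middleLevels n) :
    oneBitDiff y (F y) ∧ F y ≠ y ∧ F (F y) ≠ y := by
  obtain ⟨u, v, b, s, hu, hv, hx, hs, rfl⟩ := exists_eq_rotR_of_mem_middleLevels hn hy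
  cases b
  · rw [hf.apply_rotR_append_false_eq_rotR_cons hu hv hx hs,
      hf.apply_rotR_true_cons (hx.append_true_append_false hu hv)]
    have h := oneBitDiff_rotR_append_cons s (true :: u) (v ++ [false]) Bool.false_ne_true
    simp only [List.cons_append, List.append_assoc] at h ⊢
    exact ⟨h, h.ne.symm, fun h' => by simpa using rotR_injective s h'⟩
  · rw [hf.apply_rotR_append_true _ s hx hs,
      hf.apply_rotR_append_false_eq_rotR_cons hu hv hx hs]
    have h := oneBitDiff_rotR_append_cons s ([true] ++ u ++ [false] ++ v) [] Bool.false_ne_true.symm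
    exact ⟨h, h.ne.symm, fun h' => by simpa using rotR_injective s h'⟩

end IsCycleMap

/-- the permutation `F` of the vertices of the middle levels graph
`M_n` (given in triple notation by `f ⟨x,0,s⟩ = ⟨r x,1,s+1⟩`, `f ⟨x,1,s⟩ = ⟨x,0,s⟩`)
defines a cycle factor: it is a permutation of the vertex set, each vertex is
adjacent in `M_n` to its image (they differ in one bit), and every orbit has
length at least 3. -/
theorem cycle_factor (n : ℕ) (hn : 1 ≤ n) (r F : List Bool → List Bool)
    (hr : ∀ u v : List Bool, IsDyckWord u → IsDyckWord v →
      r ([true] ++ u ++ [false] ++ v) = u ++ [true] ++ v ++ [false])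
    (hF0 : ∀ x s, DyckN n x → s ≤ 2 * n →
      F (rotR s (x ++ [false])) = rotR (s + 1) (r x ++ [true]))
    (hF1 : ∀ x s, DyckN n x → s ≤ 2 * n →
      F (rotR s (x ++ [true])) = rotR s (x ++ [false])) :
    Set.BijOn F
        {y : List Bool | y.length = 2 * n + 1 ∧
          (y.count true = n ∨ y.count true = n + 1)}
        {y : List Bool | y.length = 2 * n + 1 ∧
          (y.count true = n ∨ y.count true = n + 1)} ∧
      ∀ y : List Bool, y.length = 2 * n + 1 →
        (y.count true = n ∨ y.count true = n + 1) →
        oneBitDiff y (F y) ∧ F y ≠ y ∧ F (F y) ≠ y := by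
  have hf : IsCycleMap n r F := ⟨hr, hF0, hF1⟩
  exact ⟨hf.bijOn hn, fun y hl hc => hf.oneBitDiff_apply_and_ne_and_apply_apply_ne hn ⟨hl, hc⟩⟩
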